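/- arXiv:1507.05719 — 2 statements merged into one kernel-verified Lean document; each statement's English description precedes it below -/
import Mathlib

section
/- Let H be a complex Hilbert space, S a positive trace class operator on H, and (Sₙ) a sequence of positive operators on H with Sₙ ≤ Sₙ₊₁ ≤ S for all n and ⟨Sₙx, x⟩ → ⟨Sx, x⟩ for every x ∈ H. Then each Sₙ is trace class, trace(S − Sₙ) → 0, and consequently trace(ASₙ) → trace(AS) for every A ∈ B(H). -/
open scoped ComplexOrder
open Filter Topology

noncomputable section

variable {H : Type*} [NormedAddCommGroup H] [InnerProductSpace ℂ H] [CompleteSpace H]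

/-- A bounded operator is Hilbert–Schmidt if `∑ ‖T e‖²` converges for some Hilbert basis. -/
def IsHilbertSchmidt (T : H →L[ℂ] H) : Prop :=
  ∃ (w : Set H) (b : HilbertBasis w ℂ H), Summable fun i => ‖T (b i)‖ ^ 2

/-- A bounded operator is trace class if it is the product of two Hilbert–Schmidt operators. -/
def IsTraceClass (T : H →L[ℂ] H) : Prop :=
  ∃ A B : H →L[ℂ] H, IsHilbertSchmidt A ∧ IsHilbertSchmidt B ∧ T = A * B

/-- The trace of an operator, computed in a fixed Hilbert basis of `H`.  For trace class
operators the value is independent of the choice of basis. -/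
def trace (T : H →L[ℂ] H) : ℂ :=
  ∑' i : (exists_hilbertBasis ℂ H).choose,
    (inner ℂ (T ((exists_hilbertBasis ℂ H).choose_spec.choose i))
      ((exists_hilbertBasis ℂ H).choose_spec.choose i) : ℂ)

/-- The normal functional `f_T : A ↦ trace (A T)` induced by `T`. -/
def traceFunctional (T : H →L[ℂ] H) : (H →L[ℂ] H) → ℂ :=
  fun A => trace (A * T)

/-- A positive linear functional on `B(H)`: a linear map with `f (A⋆A) ≥ 0` for all `A`. -/
def IsPositiveFunctional (f : (H →L[ℂ] H) → ℂ) : Prop :=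
  (∀ A B, f (A + B) = f A + f B) ∧ (∀ (c : ℂ) A, f (c • A) = c * f A) ∧
    ∀ A, 0 ≤ f (star A * A)

/-- `f ≤ g` for functionals: `g - f` is a positive functional. -/
def FunLE (f g : (H →L[ℂ] H) → ℂ) : Prop :=
  IsPositiveFunctional (fun A => g A - f A)

/-- A continuous finite rank operator. -/
def IsFiniteRank (A : H →L[ℂ] H) : Prop :=
  FiniteDimensional ℂ (LinearMap.range (A : H →ₗ[ℂ] H))

/-- A normal positive functional: one of the form `f_S` for a positive trace class `S`. -/
def IsNormalPositiveFunctional (f : (H →L[ℂ] H) → ℂ) : Prop :=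
  ∃ S : H →L[ℂ] H, S.IsPositive ∧ IsTraceClass S ∧ f = traceFunctional S

/-- Ando's absolute continuity for positive operators: `S ≪ T` if `S` is the strong limit of
a monotone increasing sequence of positive operators, each dominated by a multiple of `T`. -/
def OpAbsCont (S T : H →L[ℂ] H) : Prop :=
  ∃ (Sn : ℕ → H →L[ℂ] H) (c : ℕ → ℝ),
    (∀ n, (Sn n).IsPositive) ∧ (∀ n, (Sn (n + 1) - Sn n).IsPositive) ∧
    (∀ n, 0 ≤ c n ∧ ((c n : ℂ) • T - Sn n).IsPositive) ∧
    ∀ x : H, Tendsto (fun n => Sn n x) atTop (nhds (S x))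

/-- `g` is almost dominated by `f`: `g` is the pointwise limit of an increasing sequence of
positive functionals `gₙ ≤ g` with `gₙ ≤ cₙ f`. -/
def AlmostDominated (g f : (H →L[ℂ] H) → ℂ) : Prop :=
  ∃ (gn : ℕ → (H →L[ℂ] H) → ℂ) (c : ℕ → ℝ),
    (∀ n, IsPositiveFunctional (gn n)) ∧ (∀ n, FunLE (gn n) (gn (n + 1))) ∧
    (∀ n, FunLE (gn n) g) ∧ (∀ n, 0 ≤ c n ∧ FunLE (gn n) (fun A => (c n : ℂ) * f A)) ∧
    ∀ A, Tendsto (fun n => gn n A) atTop (nhds (g A))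

/-- Mutual singularity of positive functionals. -/
def MutuallySingularFun (f g : (H →L[ℂ] H) → ℂ) : Prop :=
  ∀ h : (H →L[ℂ] H) → ℂ, IsPositiveFunctional h → FunLE h f → FunLE h g → h = 0

/-- `(g₀, g₁)` is an `f`-Lebesgue decomposition of `g`. -/
def IsLebesgueDecomposition (f g g₀ g₁ : (H →L[ℂ] H) → ℂ) : Prop :=
  IsPositiveFunctional g₀ ∧ IsPositiveFunctional g₁ ∧ (∀ A, g A = g₀ A + g₁ A) ∧
    AlmostDominated g₀ f ∧ MutuallySingularFun g₁ f

/-!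
For a Hilbert basis `(eᵢ)`, the sum `∑ ‖X eᵢ‖²` equals `∑ ‖X† fⱼ‖²` for any other basis `(fⱼ)`
(expand both in the double sum `∑ |⟪fⱼ, X eᵢ⟫|²`), so it does not depend on the basis. Hence the
diagonal `⟪T eᵢ, eᵢ⟫ = ⟪Y eᵢ, X† eᵢ⟫` of a trace class `T = X Y` is absolutely summable, and a
positive `T` with summable diagonal is trace class, being `√T · √T` with `‖√T eᵢ‖² = ⟪T eᵢ, eᵢ⟫`.

Since `0 ≤ Sₙ ≤ S`, the diagonals of `Sₙ` and of `S - Sₙ` are dominated by that of `S`: both are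
trace class, and dominated convergence gives `trace (S - Sₙ) → 0`. Finally, writing
`A T = (A √T) √T` gives `‖trace (A T)‖ ≤ (1 + ‖A‖²) trace T` for positive trace class `T`, which is
applied to `T = S - Sₙ`.
-/

open ContinuousLinearMap
open scoped ENNReal

section HilbertSchmidtSums

variable {𝕜 E F ι κ : Type*} [RCLike 𝕜] [NormedAddCommGroup E] [InnerProductSpace 𝕜 E]
  [NormedAddCommGroup F] [InnerProductSpace 𝕜 F]

theorem HilbertBasis.tsum_enorm_inner_sq (b : HilbertBasis ι 𝕜 E) (x : E) :
    ∑' i, ‖inner 𝕜 (b i) x‖ₑ ^ 2 = ‖x‖ₑ ^ 2 := by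
  have hsum := lp.hasSum_norm (p := 2) (by norm_num) (b.repr x)
  simp only [ENNReal.toReal_ofNat, Real.rpow_two, b.repr_apply_apply,
    LinearIsometryEquiv.norm_map] at hsum
  have h := ENNReal.ofReal_tsum_of_nonneg (fun _ => by positivity) hsum.summable
  rw [hsum.tsum_eq] at h
  simpa [← ofReal_norm, ENNReal.ofReal_pow] using h.symm

theorem summable_norm_sq_iff_tsum_enorm_sq_ne_top (f : ι → E) :
    Summable (fun i => ‖f i‖ ^ 2) ↔ ∑' i, ‖f i‖ₑ ^ 2 ≠ ∞ := by
  have h (i : ι) : ‖f i‖ₑ ^ 2 = ((‖f i‖₊ ^ 2 : NNReal) : ℝ≥0∞) := by push_cast; rfl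
  simp_rw [h, ENNReal.tsum_coe_ne_top_iff_summable_coe, NNReal.coe_pow, coe_nnnorm]

theorem tsum_norm_sq_eq_toReal_tsum_enorm_sq (f : ι → E) :
    ∑' i, ‖f i‖ ^ 2 = (∑' i, ‖f i‖ₑ ^ 2).toReal := by
  rw [ENNReal.tsum_toReal_eq (fun _ => by finiteness)]
  simp [toReal_enorm]

theorem ContinuousLinearMap.norm_apply_sq_le (A : E →L[𝕜] F) (x : E) :
    ‖A x‖ ^ 2 ≤ ‖A‖ ^ 2 * ‖x‖ ^ 2 := by
  rw [← mul_pow]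
  exact pow_le_pow_left₀ (norm_nonneg _) (A.le_opNorm x) 2

theorem summable_norm_apply_sq {f : ι → E} (hf : Summable fun i => ‖f i‖ ^ 2) (A : E →L[𝕜] F) :
    Summable fun i => ‖A (f i)‖ ^ 2 :=
  (hf.mul_left _).of_nonneg_of_le (fun _ => by positivity) fun _ => A.norm_apply_sq_le _

theorem tsum_norm_apply_sq_le {f : ι → E} (hf : Summable fun i => ‖f i‖ ^ 2) (A : E →L[𝕜] F) :
    ∑' i, ‖A (f i)‖ ^ 2 ≤ ‖A‖ ^ 2 * ∑' i, ‖f i‖ ^ 2 := by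
  rw [← tsum_mul_left]
  exact (summable_norm_apply_sq hf A).tsum_le_tsum (fun _ => A.norm_apply_sq_le _)
    (hf.mul_left _)

variable [CompleteSpace E] [CompleteSpace F]

theorem tsum_enorm_adjoint_apply_sq (b : HilbertBasis ι 𝕜 E) (c : HilbertBasis κ 𝕜 F)
    (T : E →L[𝕜] F) : ∑' j, ‖adjoint T (c j)‖ₑ ^ 2 = ∑' i, ‖T (b i)‖ₑ ^ 2 := calc
  _ = ∑' j, ∑' i, ‖inner 𝕜 (b i) (adjoint T (c j))‖ₑ ^ 2 := by
    simp_rw [b.tsum_enorm_inner_sq]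
  _ = ∑' i, ∑' j, ‖inner 𝕜 (c j) (T (b i))‖ₑ ^ 2 := by
    rw [ENNReal.tsum_comm]
    refine tsum_congr fun i => tsum_congr fun j => ?_
    rw [← inner_conj_symm, RCLike.enorm_conj, adjoint_inner_left]
  _ = _ := by simp_rw [c.tsum_enorm_inner_sq]

theorem summable_norm_adjoint_apply_sq_iff (b : HilbertBasis ι 𝕜 E) (c : HilbertBasis κ 𝕜 F)
    (T : E →L[𝕜] F) :
    Summable (fun j => ‖adjoint T (c j)‖ ^ 2) ↔ Summable (fun i => ‖T (b i)‖ ^ 2) := by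
  rw [summable_norm_sq_iff_tsum_enorm_sq_ne_top, summable_norm_sq_iff_tsum_enorm_sq_ne_top,
    tsum_enorm_adjoint_apply_sq b]

theorem tsum_norm_adjoint_apply_sq (b : HilbertBasis ι 𝕜 E) (c : HilbertBasis κ 𝕜 F)
    (T : E →L[𝕜] F) : ∑' j, ‖adjoint T (c j)‖ ^ 2 = ∑' i, ‖T (b i)‖ ^ 2 := by
  rw [tsum_norm_sq_eq_toReal_tsum_enorm_sq, tsum_norm_sq_eq_toReal_tsum_enorm_sq,
    tsum_enorm_adjoint_apply_sq b]

theorem norm_inner_comp_apply_self_le (X : F →L[𝕜] E) (Y : E →L[𝕜] F) (x : E) :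
    ‖inner 𝕜 (X (Y x)) x‖ ≤ ‖adjoint X x‖ ^ 2 + ‖Y x‖ ^ 2 := by
  rw [← adjoint_inner_right]
  nlinarith [norm_inner_le_norm (𝕜 := 𝕜) (Y x) (adjoint X x), sq_nonneg (‖adjoint X x‖ - ‖Y x‖)]

variable {b : HilbertBasis ι 𝕜 E} {X : F →L[𝕜] E} {Y : E →L[𝕜] F}

theorem summable_norm_inner_comp_apply_self (hX : Summable fun i => ‖adjoint X (b i)‖ ^ 2)
    (hY : Summable fun i => ‖Y (b i)‖ ^ 2) :
    Summable fun i => ‖inner 𝕜 (X (Y (b i))) (b i)‖ :=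
  (hX.add hY).of_nonneg_of_le (fun _ => norm_nonneg _) fun _ => norm_inner_comp_apply_self_le X Y _

theorem norm_tsum_inner_comp_apply_self_le (hX : Summable fun i => ‖adjoint X (b i)‖ ^ 2)
    (hY : Summable fun i => ‖Y (b i)‖ ^ 2) :
    ‖∑' i, inner 𝕜 (X (Y (b i))) (b i)‖ ≤ ∑' i, ‖adjoint X (b i)‖ ^ 2 + ∑' i, ‖Y (b i)‖ ^ 2 := by
  rw [← hX.tsum_add hY]
  exact tsum_of_norm_bounded (hX.add hY).hasSum fun i => norm_inner_comp_apply_self_le X Y _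

end HilbertSchmidtSums

variable {ι : Type*}

theorem IsHilbertSchmidt.summable_adjoint {T : H →L[ℂ] H} (hT : IsHilbertSchmidt T)
    (c : HilbertBasis ι ℂ H) : Summable fun i => ‖adjoint T (c i)‖ ^ 2 := by
  obtain ⟨w, b, hb⟩ := hT
  exact (summable_norm_adjoint_apply_sq_iff b c T).2 hb

theorem IsHilbertSchmidt.summable {T : H →L[ℂ] H} (hT : IsHilbertSchmidt T)
    (c : HilbertBasis ι ℂ H) : Summable fun i => ‖T (c i)‖ ^ 2 := by
  simpa using (summable_norm_adjoint_apply_sq_iff c c (adjoint T)).2 (hT.summable_adjoint c)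

theorem IsHilbertSchmidt.mul_left {E : Type*} [NormedAddCommGroup E] [InnerProductSpace ℂ E]
    {T : E →L[ℂ] E} (hT : IsHilbertSchmidt T) (A : E →L[ℂ] E) :
    IsHilbertSchmidt (A * T) := by
  obtain ⟨w, b, hb⟩ := hT
  exact ⟨w, b, summable_norm_apply_sq hb A⟩

theorem IsTraceClass.mul_left {E : Type*} [NormedAddCommGroup E] [InnerProductSpace ℂ E]
    {T : E →L[ℂ] E} (hT : IsTraceClass T) (A : E →L[ℂ] E) :
    IsTraceClass (A * T) := by
  obtain ⟨X, Y, hX, hY, rfl⟩ := hT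
  exact ⟨A * X, Y, hX.mul_left A, hY, (mul_assoc A X Y).symm⟩

theorem IsTraceClass.summable_norm_inner_apply_self {T : H →L[ℂ] H} (hT : IsTraceClass T)
    (b : HilbertBasis ι ℂ H) : Summable fun i => ‖inner ℂ (T (b i)) (b i)‖ := by
  obtain ⟨X, Y, hX, hY, rfl⟩ := hT
  exact summable_norm_inner_comp_apply_self (hX.summable_adjoint b) (hY.summable b)

theorem trace_sub {T S : H →L[ℂ] H} (hT : IsTraceClass T) (hS : IsTraceClass S) :
    trace (T - S) = trace T - trace S := by
  simp only [trace, sub_apply, inner_sub_left]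
  exact (hT.summable_norm_inner_apply_self _).of_norm.tsum_sub
    (hS.summable_norm_inner_apply_self _).of_norm

namespace ContinuousLinearMap.IsPositive

variable {T S : H →L[ℂ] H}

theorem sqrt_mul_sqrt (hT : T.IsPositive) : CFC.sqrt T * CFC.sqrt T = T :=
  CFC.sqrt_mul_sqrt_self T ((nonneg_iff_isPositive T).2 hT)

theorem inner_apply_self_eq_norm_sqrt_apply_sq (hT : T.IsPositive) (x : H) :
    inner ℂ (T x) x = ((‖CFC.sqrt T x‖ ^ 2 : ℝ) : ℂ) := by
  have hsqrt := (nonneg_iff_isPositive _).1 (CFC.sqrt_nonneg T)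
  calc inner ℂ (T x) x = inner ℂ (CFC.sqrt T (CFC.sqrt T x)) x := by
        nth_rw 1 [← hT.sqrt_mul_sqrt]; rfl
    _ = inner ℂ (CFC.sqrt T x) (CFC.sqrt T x) := hsqrt.isSymmetric _ _
    _ = _ := by rw [inner_self_eq_norm_sq_to_K]; norm_cast

theorem norm_sqrt_apply_sq (hT : T.IsPositive) (x : H) :
    ‖CFC.sqrt T x‖ ^ 2 = ‖inner ℂ (T x) x‖ := by
  rw [hT.inner_apply_self_eq_norm_sqrt_apply_sq, Complex.norm_real,
    Real.norm_of_nonneg (by positivity)]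

theorem norm_inner_apply_self_le {E : Type*} [NormedAddCommGroup E] [InnerProductSpace ℂ E]
    {T S : E →L[ℂ] E} (hT : T.IsPositive) (hTS : (S - T).IsPositive) (x : E) :
    ‖inner ℂ (T x) x‖ ≤ ‖inner ℂ (S x) x‖ := by
  refine CStarAlgebra.norm_le_norm_of_nonneg_of_le (hT.inner_nonneg_left x) ?_
  simpa [sub_nonneg, sub_apply, inner_sub_left] using hTS.inner_nonneg_left x

theorem isTraceClass_of_le (hT : T.IsPositive) (hTS : (S - T).IsPositive)
    (hS : IsTraceClass S) : IsTraceClass T := by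
  obtain ⟨w, b, -⟩ := exists_hilbertBasis ℂ H
  have hsqrt : IsHilbertSchmidt (CFC.sqrt T) := by
    refine ⟨w, b, (hS.summable_norm_inner_apply_self b).of_nonneg_of_le (fun _ => by positivity)
      fun i => ?_⟩
    rw [hT.norm_sqrt_apply_sq]
    exact hT.norm_inner_apply_self_le hTS (b i)
  exact ⟨_, _, hsqrt, hsqrt, hT.sqrt_mul_sqrt.symm⟩

theorem norm_trace_mul_le (hT : T.IsPositive) (hT₁ : IsTraceClass T) (A : H →L[ℂ] H) :
    ‖trace (A * T)‖ ≤ (1 + ‖A‖ ^ 2) * ‖trace T‖ := by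
  unfold trace
  set b := (exists_hilbertBasis ℂ H).choose_spec.choose
  have hR : Summable fun i => ‖CFC.sqrt T (b i)‖ ^ 2 := by
    simpa only [hT.norm_sqrt_apply_sq] using hT₁.summable_norm_inner_apply_self b
  have htrace : ‖∑' i, inner ℂ (T (b i)) (b i)‖ = ∑' i, ‖CFC.sqrt T (b i)‖ ^ 2 := by
    rw [tsum_congr fun i => hT.inner_apply_self_eq_norm_sqrt_apply_sq (b i),
      ← Complex.ofReal_tsum, Complex.norm_real,
      Real.norm_of_nonneg (tsum_nonneg fun _ => by positivity)]
  have hfac : A * T = (A * CFC.sqrt T) * CFC.sqrt T := by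
    rw [mul_assoc, hT.sqrt_mul_sqrt]
  set R := CFC.sqrt T
  rw [htrace, hfac]
  calc ‖∑' i, inner ℂ ((A * R) (R (b i))) (b i)‖
      ≤ ∑' i, ‖adjoint (A * R) (b i)‖ ^ 2 + ∑' i, ‖R (b i)‖ ^ 2 :=
        norm_tsum_inner_comp_apply_self_le
          ((summable_norm_adjoint_apply_sq_iff b b _).2 (summable_norm_apply_sq hR A)) hR
    _ = ∑' i, ‖A (R (b i))‖ ^ 2 + ∑' i, ‖R (b i)‖ ^ 2 := by rw [tsum_norm_adjoint_apply_sq b b]; rfl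
    _ ≤ ‖A‖ ^ 2 * ∑' i, ‖R (b i)‖ ^ 2 + ∑' i, ‖R (b i)‖ ^ 2 := by
        gcongr; exact tsum_norm_apply_sq_le hR A
    _ = (1 + ‖A‖ ^ 2) * ∑' i, ‖R (b i)‖ ^ 2 := by ring

end ContinuousLinearMap.IsPositive

theorem tendsto_trace_zero_of_le {α : Type*} {l : Filter α} {S : H →L[ℂ] H} {T : α → H →L[ℂ] H}
    (hS : IsTraceClass S) (hT : ∀ n, (T n).IsPositive) (hTS : ∀ n, (S - T n).IsPositive)
    (h : ∀ x, Tendsto (fun n => inner ℂ (T n x) x) l (𝓝 0)) :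
    Tendsto (fun n => trace (T n)) l (𝓝 0) := by
  unfold trace
  simpa using tendsto_tsum_of_dominated_convergence (hS.summable_norm_inner_apply_self _)
    (fun _ => h _) (Eventually.of_forall fun n _ => (hT n).norm_inner_apply_self_le (hTS n) _)

theorem trace_tendsto_of_monotone_general (S : H →L[ℂ] H) (hS₁ : IsTraceClass S)
    (Sn : ℕ → H →L[ℂ] H) (hpos : ∀ n, (Sn n).IsPositive)
    (hle : ∀ n, (S - Sn n).IsPositive)
    (hconv : ∀ x : H,
      Tendsto (fun n => (inner ℂ (Sn n x) x : ℂ)) atTop (nhds (inner ℂ (S x) x))) :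
    (∀ n, IsTraceClass (Sn n)) ∧
      Tendsto (fun n => trace (S - Sn n)) atTop (nhds 0) ∧
      ∀ A : H →L[ℂ] H,
        Tendsto (fun n => trace (A * Sn n)) atTop (nhds (trace (A * S))) := by
  have hgap_pos : ∀ n, (S - (S - Sn n)).IsPositive := fun n => by simpa using hpos n
  have hSn : ∀ n, IsTraceClass (Sn n) := fun n => (hpos n).isTraceClass_of_le (hle n) hS₁
  have hgap : ∀ n, IsTraceClass (S - Sn n) := fun n =>
    (hle n).isTraceClass_of_le (hgap_pos n) hS₁
  have hlim : Tendsto (fun n => trace (S - Sn n)) atTop (𝓝 0) := by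
    refine tendsto_trace_zero_of_le hS₁ hle hgap_pos fun x => ?_
    simpa [sub_apply, inner_sub_left] using (hconv x).const_sub (inner ℂ (S x) x)
  refine ⟨hSn, hlim, fun A => ?_⟩
  have hdiff (n : ℕ) : trace (A * S) - trace (A * Sn n) = trace (A * (S - Sn n)) := by
    rw [mul_sub, trace_sub (hS₁.mul_left A) ((hSn n).mul_left A)]
  rw [tendsto_iff_norm_sub_tendsto_zero]
  refine squeeze_zero (fun n => norm_nonneg _) (fun n => ?_)
    (by simpa using hlim.norm.const_mul (1 + ‖A‖ ^ 2))
  rw [norm_sub_rev, hdiff]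
  exact (hle n).norm_trace_mul_le (hgap n) A

/-- if `(Sₙ)` increases to a positive trace class operator `S` in the weak
(quadratic form) sense, then each `Sₙ` is trace class, `trace (S - Sₙ) → 0`, and
`trace (A Sₙ) → trace (A S)` for every bounded `A`. -/
theorem trace_tendsto_of_monotone (S : H →L[ℂ] H) (hS : S.IsPositive) (hS₁ : IsTraceClass S)
    (Sn : ℕ → H →L[ℂ] H) (hpos : ∀ n, (Sn n).IsPositive)
    (hmono : ∀ n, (Sn (n + 1) - Sn n).IsPositive) (hle : ∀ n, (S - Sn n).IsPositive)
    (hconv : ∀ x : H,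
      Tendsto (fun n => (inner ℂ (Sn n x) x : ℂ)) atTop (nhds (inner ℂ (S x) x))) :
    (∀ n, IsTraceClass (Sn n)) ∧
      Tendsto (fun n => trace (S - Sn n)) atTop (nhds 0) ∧
      ∀ A : H →L[ℂ] H,
        Tendsto (fun n => trace (A * Sn n)) atTop (nhds (trace (A * S))) :=
  trace_tendsto_of_monotone_general S hS₁ Sn hpos hle hconv

end
end

section
/- Let H be a complex Hilbert space, T a positive finite rank operator on H, and S a positive bounded operator on H that is T-absolutely continuous, i.e. there is a monotone increasing sequence (Sₙ) of positive operators with Sₙ ≤ cₙT for some constants cₙ ≥ 0 and Sₙ → S in the strong operator topology. Then there exists a constant c ≥ 0 such that S ≤ cT. -/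
/-!
Since `T` is positive, `ker T = (range T)ᗮ`, and on the finite-dimensional space `range T` the
form `⟪T u, u⟫` is bounded below by `ε ‖u‖²` for some `ε > 0` (compactness of the unit sphere).
Each `Sₙ ≤ cₙ T` vanishes on `ker T` as a form, hence so does the strong limit `S`, and a
positive operator whose form vanishes at `v` kills `v`. Splitting `x = u + v` along
`range T ⊕ ker T` then gives `⟪S x, x⟫ = ⟪S u, u⟫ ≤ ‖S‖ ‖u‖² ≤ (‖S‖ / ε) ⟪T x, x⟫`.
-/

open scoped ComplexOrder
open Filter Topology

noncomputable section

variable {H : Type*} [NormedAddCommGroup H] [InnerProductSpace ℂ H] [CompleteSpace H]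

namespace ContinuousLinearMap

section RCLike

variable {𝕜 E : Type*} [RCLike 𝕜] [NormedAddCommGroup E] [InnerProductSpace 𝕜 E]

lemma _root_.LinearMap.IsSymmetric.reApplyInnerSelf_add_of_apply_eq_zero {T : E →L[𝕜] E}
    (hT : (T : E →ₗ[𝕜] E).IsSymmetric) (u : E) {v : E} (hv : T v = 0) :
    T.reApplyInnerSelf (u + v) = T.reApplyInnerSelf u := by
  have hcross : inner 𝕜 (T u) v = 0 := by rw [← coe_coe, hT, coe_coe, hv, inner_zero_right]
  simp [reApplyInnerSelf_apply, hv, inner_add_right, hcross]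

lemma reApplyInnerSelf_le_norm_mul_norm_sq (T : E →L[𝕜] E) (u : E) :
    T.reApplyInnerSelf u ≤ ‖T‖ * ‖u‖ ^ 2 :=
  calc T.reApplyInnerSelf u ≤ ‖T u‖ * ‖u‖ := re_inner_le_norm _ _
    _ ≤ ‖T‖ * ‖u‖ * ‖u‖ := by gcongr; exact T.le_opNorm u
    _ = ‖T‖ * ‖u‖ ^ 2 := by ring

end RCLike

variable {T S : H →L[ℂ] H}

lemma IsPositive.apply_eq_zero_of_reApplyInnerSelf_eq_zero (hS : S.IsPositive) {x : H}
    (hx : S.reApplyInnerSelf x = 0) : S x = 0 := by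
  obtain ⟨R, rfl⟩ := CStarAlgebra.nonneg_iff_eq_star_mul_self.mp ((nonneg_iff_isPositive S).mpr hS)
  have hRx : R x = 0 := by
    -- `re ⟪R† R x, x⟫ = ‖R x‖²`
    rw [← norm_eq_zero, ← sq_eq_zero_iff, apply_norm_sq_eq_inner_adjoint_left]
    simpa [star_eq_adjoint, reApplyInnerSelf_apply] using hx
  simp [hRx]

/-- The form attains a positive minimum on the compact unit sphere of `V`. -/
lemma IsPositive.exists_pos_mul_norm_sq_le_reApplyInnerSelf (hT : T.IsPositive)
    (V : Submodule ℂ H) [FiniteDimensional ℂ V]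
    (hV : Disjoint V (LinearMap.ker (T : H →ₗ[ℂ] H))) :
    ∃ ε > 0, ∀ u ∈ V, ε * ‖u‖ ^ 2 ≤ T.reApplyInnerSelf u := by
  have hsphere : ∀ u ∈ Metric.sphere (0 : V) 1, 0 < T.reApplyInnerSelf u := by
    intro u hu
    refine (hT.2 u).lt_of_ne fun h => ?_
    have hu0 : (u : H) = 0 :=
      hV.le_bot ⟨u.2, hT.apply_eq_zero_of_reApplyInnerSelf_eq_zero h.symm⟩
    simp [Submodule.coe_eq_zero.mp hu0] at hu
  obtain ⟨ε, hε, hmin⟩ := (isCompact_sphere (0 : V) 1).exists_forall_le'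
    (T.reApplyInnerSelf_continuous.comp continuous_subtype_val).continuousOn hsphere
  refine ⟨ε, hε, fun u hu => ?_⟩
  rcases eq_or_ne u 0 with rfl | hu0
  · simp [reApplyInnerSelf_apply]
  have hnorm : 0 < ‖u‖ := norm_pos_iff.mpr hu0
  have hunit : ((‖u‖ : ℂ)⁻¹ • (⟨u, hu⟩ : V)) ∈ Metric.sphere (0 : V) 1 := by
    simp [norm_smul, hnorm.ne']
  have := hmin _ hunit
  simp only [Function.comp_apply, Submodule.coe_smul, reApplyInnerSelf_smul, norm_inv,
    Complex.norm_real, norm_norm] at this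
  calc ε * ‖u‖ ^ 2 ≤ ‖u‖⁻¹ ^ 2 * T.reApplyInnerSelf u * ‖u‖ ^ 2 := by gcongr
    _ = T.reApplyInnerSelf u := by field_simp

lemma isPositive_smul_sub_of_ker_le_ker (hT : T.IsPositive) (hS : IsSelfAdjoint S)
    (hker : LinearMap.ker (T : H →ₗ[ℂ] H) ≤ LinearMap.ker (S : H →ₗ[ℂ] H)) {ε : ℝ} (hε : 0 < ε)
    (hcoer : ∀ u ∈ (LinearMap.ker (T : H →ₗ[ℂ] H))ᗮ, ε * ‖u‖ ^ 2 ≤ T.reApplyInnerSelf u) :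
    (((‖S‖ / ε : ℝ) : ℂ) • T - S).IsPositive := by
  have hc : (0 : ℂ) ≤ ((‖S‖ / ε : ℝ) : ℂ) := Complex.zero_le_real.mpr (by positivity)
  have hsa := (hT.smul_of_nonneg hc).isSelfAdjoint.sub hS
  refine isPositive_def'.mpr ⟨hsa, fun x => ?_⟩
  obtain ⟨u, hu, v, hv, rfl⟩ := (LinearMap.ker (T : H →ₗ[ℂ] H))ᗮ.exists_add_mem_mem_orthogonal x
  rw [Submodule.orthogonal_orthogonal] at hv
  have hTSv : (((‖S‖ / ε : ℝ) : ℂ) • T - S) v = 0 := by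
    simp [show T v = 0 from hv, show S v = 0 from hker hv]
  rw [hsa.isSymmetric.reApplyInnerSelf_add_of_apply_eq_zero u hTSv]
  have hexpand : (((‖S‖ / ε : ℝ) : ℂ) • T - S).reApplyInnerSelf u
      = ‖S‖ / ε * T.reApplyInnerSelf u - S.reApplyInnerSelf u := by
    simp [reApplyInnerSelf_apply, inner_sub_left, inner_smul_left]
  have hdom : S.reApplyInnerSelf u ≤ ‖S‖ / ε * T.reApplyInnerSelf u :=
    calc S.reApplyInnerSelf u ≤ ‖S‖ * ‖u‖ ^ 2 := S.reApplyInnerSelf_le_norm_mul_norm_sq u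
      _ = ‖S‖ / ε * (ε * ‖u‖ ^ 2) := by field_simp
      _ ≤ ‖S‖ / ε * T.reApplyInnerSelf u := by gcongr; exact hcoer u hu
  rw [hexpand]
  linarith

end ContinuousLinearMap

theorem OpAbsCont.reApplyInnerSelf_eq_zero_of_apply_eq_zero {E : Type*} [NormedAddCommGroup E]
    [InnerProductSpace ℂ E] {S T : E →L[ℂ] E} (hAC : OpAbsCont S T) {v : E} (hv : T v = 0) : S.reApplyInnerSelf v = 0 := by
  obtain ⟨Sn, c, hpos, -, hdom, hlim⟩ := hAC
  have hzero : ∀ n, (Sn n).reApplyInnerSelf v = 0 := by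
    intro n
    have h := (hdom n).2.2 v
    simp only [ContinuousLinearMap.reApplyInnerSelf_apply, sub_apply, smul_apply, hv, smul_zero,
      zero_sub, inner_neg_left, map_neg, Left.nonneg_neg_iff] at h
    exact le_antisymm h ((hpos n).2 v)
  have hlim' : Tendsto (fun n => (Sn n).reApplyInnerSelf v) atTop
      (𝓝 (S.reApplyInnerSelf v)) :=
    ((RCLike.continuous_re.comp (continuous_id.inner continuous_const)).tendsto _).comp (hlim v)
  exact tendsto_nhds_unique hlim' (by simp [hzero])

theorem OpAbsCont.ker_le_ker {S T : H →L[ℂ] H} (hAC : OpAbsCont S T) (hS : S.IsPositive) :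
    LinearMap.ker (T : H →ₗ[ℂ] H) ≤ LinearMap.ker (S : H →ₗ[ℂ] H) := fun _ hv =>
  hS.apply_eq_zero_of_reApplyInnerSelf_eq_zero (hAC.reApplyInnerSelf_eq_zero_of_apply_eq_zero hv)

/-- if `T` is a positive finite rank operator and the positive operator `S` is
`T`-absolutely continuous, then `S ≤ cT` for some constant `c ≥ 0`. -/
theorem dominated_of_absCont_finiteRank (T S : H →L[ℂ] H) (hT : T.IsPositive)
    (hfin : FiniteDimensional ℂ (LinearMap.range (T : H →ₗ[ℂ] H))) (hS : S.IsPositive)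
    (hAC : OpAbsCont S T) :
    ∃ c : ℝ, 0 ≤ c ∧ ((c : ℂ) • T - S).IsPositive := by
  have hker := hAC.ker_le_ker hS
  have hcoimage : (LinearMap.ker (T : H →ₗ[ℂ] H))ᗮ = LinearMap.range (T : H →ₗ[ℂ] H) := by
    rw [← hT.isSymmetric.orthogonal_range, Submodule.orthogonal_orthogonal]
  have : FiniteDimensional ℂ (LinearMap.ker (T : H →ₗ[ℂ] H))ᗮ := hcoimage ▸ hfin
  obtain ⟨ε, hε, hcoer⟩ := hT.exists_pos_mul_norm_sq_le_reApplyInnerSelf _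
    (Submodule.orthogonal_disjoint _).symm
  exact ⟨‖S‖ / ε, by positivity,
    ContinuousLinearMap.isPositive_smul_sub_of_ker_le_ker hT hS.isSelfAdjoint hker hε hcoer⟩
end
end
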